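/- arXiv:0707.3853 — 6 statements merged into one kernel-verified Lean document; each statement's English description precedes it below -/
import Mathlib

section
/- For every x ∈ H the family (Φ_k x)_{k∈ℤ} is (unconditionally) summable in H with Σ_{k∈ℤ} Φ_k x = x; moreover ‖x‖² = Σ_{k∈ℤ} ‖Φ_k x‖². -/
open MeasureTheory
open scoped InnerProductSpace ComplexConjugate

noncomputable instance : MeasurableSpace Circle := borel Circle
instance : BorelSpace Circle := ⟨rfl⟩

namespace Stmt2Aux

lemma coe_zpow (z : Circle) (n : ℤ) : ((z ^ n : Circle) : ℂ) = (z : ℂ) ^ n := by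
  cases n with
  | ofNat m => norm_cast
  | negSucc m =>
      simp only [zpow_negSucc, Circle.coe_inv]
      norm_cast

lemma cont_char (n : ℤ) : Continuous fun z : Circle => ((z ^ n : Circle) : ℂ) :=
  continuous_subtype_val.comp (continuous_zpow n)

variable {H : Type*} [NormedAddCommGroup H] [InnerProductSpace ℂ H] [CompleteSpace H]
variable (μ : Measure Circle) [μ.IsHaarMeasure] [IsProbabilityMeasure μ]
variable (γ : Circle → H →L[ℂ] H)

/-- integrability of continuous functions on the circle -/
lemma integrable_cont {E : Type*} [NormedAddCommGroup E] {f : Circle → E} (hf : Continuous f) :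
    Integrable f μ :=
  hf.integrable_of_hasCompactSupport
    (IsCompact.of_isClosed_subset isCompact_univ (isClosed_tsupport _) (Set.subset_univ _))

/-- the spectral operator as a bare function -/
noncomputable def Phi (k : ℤ) (x : H) : H := ∫ z : Circle, ((z ^ (-k) : Circle) : ℂ) • γ z x ∂μ

variable (hγu : ∀ z, γ z ∈ unitary (H →L[ℂ] H))
    (hγ1 : γ 1 = 1)
    (hγm : ∀ z w, γ (z * w) = γ z ∘L γ w)
    (hγc : ∀ x : H, Continuous fun z => γ z x)

section
include hγc

lemma integrable_aux (f : Circle → ℂ) (hf : Continuous f) (x : H) :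
    Integrable (fun z => f z • γ z x) μ :=
  integrable_cont μ (hf.smul (hγc x))

/-- vanishing of nontrivial characters -/
lemma char_integral (m : ℤ) (hm : m ≠ 0) :
    ∫ z : Circle, ((z ^ m : Circle) : ℂ) ∂μ = 0 := by
  set w : Circle := Circle.exp (Real.pi / m) with hw
  have hwm : ((w ^ m : Circle) : ℂ) = -1 := by
    rw [coe_zpow, hw, Circle.coe_exp, ← Complex.exp_int_mul]
    have : (m : ℂ) * (↑(Real.pi / m) * Complex.I) = Real.pi * Complex.I := by
      push_cast
      have : (m : ℂ) ≠ 0 := Int.cast_ne_zero.mpr hm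
      field_simp
    rw [this, Complex.exp_pi_mul_I]
  have h := integral_mul_left_eq_self (μ := μ) (fun z : Circle => ((z ^ m : Circle) : ℂ)) w
  have h2 : ∀ z : Circle, (((w * z) ^ m : Circle) : ℂ)
      = ((w ^ m : Circle) : ℂ) * ((z ^ m : Circle) : ℂ) := by
    intro z; rw [mul_zpow]; norm_cast
  simp only [h2, hwm, integral_const_mul] at h
  -- h : -1 * ∫ = ∫
  set c := ∫ z : Circle, ((z ^ m : Circle) : ℂ) ∂μ
  linear_combination (-1/2 : ℂ) * h

include hγm in
/-- equivariance: `γ w (Phi k x) = w ^ k • Phi k x` -/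
lemma gamma_Phi (k : ℤ) (x : H) (w : Circle) :
    γ w (Phi μ γ k x) = ((w ^ k : Circle) : ℂ) • Phi μ γ k x := by
  have hint := integrable_aux μ γ hγc _ (cont_char (-k)) x
  rw [Phi, ← ContinuousLinearMap.integral_comp_comm _ hint]
  have key : ∀ z : Circle, γ w (((z ^ (-k) : Circle) : ℂ) • γ z x)
      = ((w ^ k : Circle) : ℂ) • ((((w * z) ^ (-k) : Circle) : ℂ) • γ (w * z) x) := by
    intro z
    have hc : ((w ^ k : Circle) : ℂ) * (((w * z) ^ (-k) : Circle) : ℂ)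
        = ((z ^ (-k) : Circle) : ℂ) := by
      simp only [coe_zpow, Circle.coe_mul, mul_zpow]
      rw [← mul_assoc, ← zpow_add₀ (Circle.coe_ne_zero w)]
      simp
    rw [(γ w).map_smul, hγm, smul_smul, hc]
    rfl
  simp_rw [key]
  rw [integral_smul]
  congr 1
  exact integral_mul_left_eq_self (fun u : Circle => ((u ^ (-k) : Circle) : ℂ) • γ u x) w

/-- `Phi j` on a vector of weight `k` -/
lemma Phi_eigen (j k : ℤ) (v : H) (hv : ∀ z : Circle, γ z v = ((z ^ k : Circle) : ℂ) • v) :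
    Phi μ γ j v = if j = k then v else 0 := by
  have h : ∀ z : Circle, ((z ^ (-j) : Circle) : ℂ) • γ z v
      = ((z ^ (k - j) : Circle) : ℂ) • v := by
    intro z
    rw [hv, smul_smul]
    congr 1
    simp only [coe_zpow]
    rw [← zpow_add₀ (Circle.coe_ne_zero z)]
    ring_nf
  rw [Phi]
  simp_rw [h]
  rw [integral_smul_const]
  by_cases hjk : j = k
  · subst hjk
    simp
  · rw [char_integral μ γ hγc _ (sub_ne_zero.mpr (Ne.symm hjk)), if_neg hjk, zero_smul]

end

section
include hγu hγ1 hγm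

lemma star_gamma (z : Circle) : star (γ z) = γ z⁻¹ := by
  have h2 : γ z * γ z⁻¹ = 1 := by
    rw [← hγ1, ← mul_inv_cancel z]
    exact (hγm z z⁻¹).symm
  calc star (γ z) = star (γ z) * (γ z * γ z⁻¹) := by rw [h2, mul_one]
    _ = (star (γ z) * γ z) * γ z⁻¹ := by rw [mul_assoc]
    _ = γ z⁻¹ := by rw [(Unitary.mem_iff.mp (hγu z)).1, one_mul]

lemma inner_gamma (z : Circle) (a b : H) : ⟪γ z a, b⟫_ℂ = ⟪a, γ z⁻¹ b⟫_ℂ := by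
  rw [← star_gamma γ hγu hγ1 hγm z, ContinuousLinearMap.star_eq_adjoint,
    ContinuousLinearMap.adjoint_inner_right]

include hγc in
lemma Phi_adjoint (k : ℤ) (u v : H) : ⟪Phi μ γ k u, v⟫_ℂ = ⟪u, Phi μ γ k v⟫_ℂ := by
  have hiu := integrable_aux μ γ hγc _ (cont_char (-k)) u
  have hiv := integrable_aux μ γ hγc _ (cont_char (-k)) v
  have step1 : ⟪Phi μ γ k u, v⟫_ℂ
      = ∫ z : Circle, conj ⟪v, ((z ^ (-k) : Circle) : ℂ) • γ z u⟫_ℂ ∂μ := by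
    simp only [Phi]
    rw [← inner_conj_symm, ← integral_inner hiu, ← integral_conj]
  rw [step1]
  have step2 : ∀ z : Circle, conj ⟪v, ((z ^ (-k) : Circle) : ℂ) • γ z u⟫_ℂ
      = ((z ^ k : Circle) : ℂ) * ⟪u, γ z⁻¹ v⟫_ℂ := by
    intro z
    rw [inner_smul_right, map_mul, inner_conj_symm, inner_gamma γ hγu hγ1 hγm]
    congr 1
    rw [← Circle.coe_inv_eq_conj, ← zpow_neg, neg_neg]
  simp_rw [step2]
  have step3 : ∫ z : Circle, ((z ^ k : Circle) : ℂ) * ⟪u, γ z⁻¹ v⟫_ℂ ∂μ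
      = ∫ z : Circle, ((z ^ (-k) : Circle) : ℂ) * ⟪u, γ z v⟫_ℂ ∂μ := by
    rw [← integral_inv_eq_self (fun z : Circle => ((z ^ (-k) : Circle) : ℂ) * ⟪u, γ z v⟫_ℂ) μ]
    congr 1
    funext z
    congr 2
    simp [zpow_neg]
    rfl
  rw [step3]
  simp only [Phi]
  rw [← integral_inner hiv]
  congr 1
  funext z
  rw [inner_smul_right]

end

include hγu hγc in
/-- the spectral operator as a continuous linear map -/
noncomputable def PhiCLM (k : ℤ) : H →L[ℂ] H :=
  LinearMap.mkContinuous
    { toFun := fun x => Phi μ γ k x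
      map_add' := by
        intro a b
        simp only [Phi]
        rw [← integral_add (integrable_aux μ γ hγc _ (cont_char (-k)) a)
          (integrable_aux μ γ hγc _ (cont_char (-k)) b)]
        congr 1
        funext z
        rw [map_add, smul_add]
      map_smul' := by
        intro c a
        simp only [Phi, RingHom.id_apply]
        rw [← integral_smul]
        congr 1
        funext z
        rw [(γ z).map_smul, smul_comm] }
    1
    (by
      intro a
      simp only [LinearMap.coe_mk, AddHom.coe_mk, one_mul, Phi]
      refine le_trans (norm_integral_le_of_norm_le_const (C := ‖a‖) ?_) (by simp)
      filter_upwards with z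
      rw [norm_smul]
      simp only [Circle.norm_coe, one_mul]
      exact le_of_eq (ContinuousLinearMap.norm_map_of_mem_unitary (hγu z) a))

lemma PhiCLM_apply (k : ℤ) (x : H) : PhiCLM μ γ hγu hγc k x = Phi μ γ k x := rfl


/-! ### Density of trigonometric polynomials on the circle -/

/-- the monomial `z ^ k` as a continuous map -/
noncomputable def charCM (k : ℤ) : C(Circle, ℂ) := ⟨fun z => ((z ^ k : Circle) : ℂ), cont_char k⟩

lemma charCM_apply (k : ℤ) (z : Circle) : charCM k z = ((z ^ k : Circle) : ℂ) := rfl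

lemma charCM_mul (j k : ℤ) : charCM j * charCM k = charCM (j + k) := by
  ext z
  simp only [ContinuousMap.mul_apply, charCM_apply, coe_zpow]
  rw [← zpow_add₀ (Circle.coe_ne_zero z)]

lemma charCM_zero : charCM 0 = 1 := by
  ext z; simp [charCM_apply]

lemma charCM_star (k : ℤ) : star (charCM k) = charCM (-k) := by
  ext z
  simp only [ContinuousMap.star_apply, charCM_apply]
  rw [zpow_neg, Circle.coe_inv_eq_conj]
  rfl

/-- The star subalgebra generated by the monomials. -/
noncomputable def charSubalgebra : StarSubalgebra ℂ C(Circle, ℂ) where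
  toSubalgebra := Algebra.adjoin ℂ (Set.range charCM)
  star_mem' := by
    show Algebra.adjoin ℂ (Set.range charCM) ≤ star (Algebra.adjoin ℂ (Set.range charCM))
    refine Algebra.adjoin_le ?_
    rintro - ⟨n, rfl⟩
    exact Algebra.subset_adjoin ⟨-n, (charCM_star n).symm⟩

lemma charSubalgebra_coe :
    Subalgebra.toSubmodule charSubalgebra.toSubalgebra
      = Submodule.span ℂ (Set.range charCM) := by
  apply Algebra.adjoin_eq_span_of_subset
  refine Set.Subset.trans ?_ Submodule.subset_span
  intro x hx
  refine Submonoid.closure_induction (fun _ => id) ⟨0, charCM_zero⟩ ?_ hx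
  rintro - - - - ⟨m, rfl⟩ ⟨n, rfl⟩
  exact ⟨m + n, (charCM_mul m n).symm⟩

lemma charSubalgebra_separatesPoints : charSubalgebra.SeparatesPoints := by
  intro x y hxy
  refine ⟨_, ⟨charCM 1, Algebra.subset_adjoin ⟨1, rfl⟩, rfl⟩, ?_⟩
  simp only [charCM_apply, zpow_one]
  exact fun h => hxy (Subtype.coe_injective h)

lemma charSubalgebra_closure_eq_top : charSubalgebra.topologicalClosure = ⊤ :=
  ContinuousMap.starSubalgebra_topologicalClosure_eq_top_of_separatesPoints charSubalgebra
    charSubalgebra_separatesPoints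

lemma span_char_closure_eq_top :
    (Submodule.span ℂ (Set.range charCM)).topologicalClosure = ⊤ := by
  rw [← charSubalgebra_coe]
  exact congr_arg (Subalgebra.toSubmodule <| StarSubalgebra.toSubalgebra ·)
    charSubalgebra_closure_eq_top

lemma mem_closure_span_char (g : C(Circle, ℂ)) :
    g ∈ closure ((Submodule.span ℂ (Set.range charCM) : Submodule ℂ C(Circle, ℂ))
      : Set C(Circle, ℂ)) := by
  rw [← Submodule.topologicalClosure_coe, span_char_closure_eq_top]
  trivial

/-! ### Vanishing of all coefficients implies zero -/

include hγu hγ1 hγm hγc in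
lemma eq_zero_of_coeffs_vanish (w : H) (hw : ∀ k : ℤ, Phi μ γ k w = 0) : w = 0 := by
  -- the functional `g ↦ ∫ g z • γ z w dμ`
  let T : C(Circle, ℂ) →L[ℂ] H := LinearMap.mkContinuous
    { toFun := fun g => ∫ z : Circle, g z • γ z w ∂μ
      map_add' := by
        intro f g
        rw [← integral_add (integrable_aux μ γ hγc _ f.continuous w)
          (integrable_aux μ γ hγc _ g.continuous w)]
        simp [add_smul]
      map_smul' := by
        intro c g
        rw [← integral_smul]
        simp [smul_smul] }
    ‖w‖
    (by
      intro g
      simp only [LinearMap.coe_mk, AddHom.coe_mk]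
      refine le_trans (norm_integral_le_of_norm_le_const (C := ‖g‖ * ‖w‖) ?_) ?_
      · filter_upwards with z
        rw [norm_smul, ContinuousLinearMap.norm_map_of_mem_unitary (hγu z)]
        exact mul_le_mul_of_nonneg_right (g.norm_coe_le_norm z) (norm_nonneg w)
      · simp [mul_comm])
  have hT : ∀ g : C(Circle, ℂ), T g = ∫ z : Circle, g z • γ z w ∂μ := fun g => rfl
  have hTchar : ∀ k : ℤ, T (charCM k) = 0 := by
    intro k
    rw [hT]
    have := hw (-k)
    rwa [Phi, neg_neg] at this
  have hTall : ∀ g : C(Circle, ℂ), T g = 0 := by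
    intro g
    have hle : Submodule.span ℂ (Set.range charCM)
        ≤ LinearMap.ker (T : C(Circle, ℂ) →ₗ[ℂ] H) := by
      rw [Submodule.span_le]
      rintro - ⟨k, rfl⟩
      exact hTchar k
    have hcl : IsClosed {g : C(Circle, ℂ) | T g = 0} :=
      isClosed_eq T.continuous continuous_const
    exact hcl.closure_subset_iff.mpr (fun f hf => hle hf) (mem_closure_span_char g)
  -- apply to the matrix coefficient
  have hcont : Continuous fun z : Circle => ⟪γ z w, w⟫_ℂ :=
    Continuous.inner (hγc w) continuous_const
  have h0 : T ⟨fun z => ⟪γ z w, w⟫_ℂ, hcont⟩ = 0 := hTall _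
  rw [hT] at h0
  simp only [ContinuousMap.coe_mk] at h0
  have h1 : ⟪w, (0 : H)⟫_ℂ
      = ∫ z : Circle, ((Complex.normSq ⟪γ z w, w⟫_ℂ : ℝ) : ℂ) ∂μ := by
    rw [← h0, ← integral_inner (integrable_aux μ γ hγc _ hcont w)]
    congr 1
    funext z
    rw [inner_smul_right, ← inner_conj_symm w (γ z w), Complex.mul_conj]
  rw [inner_zero_right] at h1
  have h2 : ∫ z : Circle, Complex.normSq ⟪γ z w, w⟫_ℂ ∂μ = 0 := by
    have hint : Integrable (fun z : Circle => ((Complex.normSq ⟪γ z w, w⟫_ℂ : ℝ) : ℂ)) μ :=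
      integrable_cont μ (Complex.continuous_ofReal.comp (Complex.continuous_normSq.comp hcont))
    have h := integral_re hint
    rw [← h1, map_zero] at h
    simpa using h
  have h3 : (fun z : Circle => Complex.normSq ⟪γ z w, w⟫_ℂ) = fun _ => 0 := by
    have hint : Integrable (fun z : Circle => Complex.normSq ⟪γ z w, w⟫_ℂ) μ :=
      integrable_cont μ (Complex.continuous_normSq.comp hcont)
    have hae := (integral_eq_zero_iff_of_nonneg (fun z => Complex.normSq_nonneg _) hint).mp h2
    exact (Continuous.ae_eq_iff_eq μ (Complex.continuous_normSq.comp hcont)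
      continuous_const).mp hae
  have h4 := congrFun h3 1
  rw [hγ1] at h4
  simp only [ContinuousLinearMap.one_apply] at h4
  have h5 : ⟪w, w⟫_ℂ = 0 := Complex.normSq_eq_zero.mp h4
  exact inner_self_eq_zero.mp h5

end Stmt2Aux

theorem stmt2
    (H : Type*) [NormedAddCommGroup H] [InnerProductSpace ℂ H] [CompleteSpace H]
    (μ : Measure Circle) [μ.IsHaarMeasure] [IsProbabilityMeasure μ]
    (γ : Circle → H →L[ℂ] H)
    (hγu : ∀ z, γ z ∈ unitary (H →L[ℂ] H))
    (hγ1 : γ 1 = 1)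
    (hγm : ∀ z w, γ (z * w) = γ z ∘L γ w)
    (hγc : ∀ x : H, Continuous fun z => γ z x) :
    ∀ x : H,
      HasSum (fun k : ℤ => ∫ z : Circle, ((z ^ (-k) : Circle) : ℂ) • γ z x ∂μ) x ∧
      ‖x‖ ^ 2 = ∑' k : ℤ, ‖∫ z : Circle, ((z ^ (-k) : Circle) : ℂ) • γ z x ∂μ‖ ^ 2 := by
  intro x
  open Stmt2Aux in
  show HasSum (fun k : ℤ => Phi μ γ k x) x ∧ ‖x‖ ^ 2 = ∑' k : ℤ, ‖Phi μ γ k x‖ ^ 2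
  set y : ℤ → H := fun k => Stmt2Aux.Phi μ γ k x with hy
  have PhiPhi : ∀ j k : ℤ, Stmt2Aux.Phi μ γ j (y k) = if j = k then y k else 0 := fun j k =>
    Stmt2Aux.Phi_eigen μ γ hγc j k (y k) (fun z => Stmt2Aux.gamma_Phi μ γ hγm hγc k x z)
  have orth : ∀ j k : ℤ, j ≠ k → ⟪y j, y k⟫_ℂ = 0 := by
    intro j k hjk
    calc ⟪y j, y k⟫_ℂ = ⟪x, Stmt2Aux.Phi μ γ j (y k)⟫_ℂ :=
          Stmt2Aux.Phi_adjoint μ γ hγu hγ1 hγm hγc j x (y k)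
      _ = 0 := by rw [PhiPhi j k, if_neg hjk, inner_zero_right]
  have hself : ∀ k : ℤ, ⟪y k, x⟫_ℂ = ((‖y k‖ ^ 2 : ℝ) : ℂ) := by
    intro k
    have h1 : Stmt2Aux.Phi μ γ k (y k) = y k := by rw [PhiPhi k k, if_pos rfl]
    calc ⟪y k, x⟫_ℂ = ⟪Stmt2Aux.Phi μ γ k (y k), x⟫_ℂ := by rw [h1]
      _ = ⟪y k, Stmt2Aux.Phi μ γ k x⟫_ℂ :=
          Stmt2Aux.Phi_adjoint μ γ hγu hγ1 hγm hγc k (y k) x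
      _ = ⟪y k, y k⟫_ℂ := rfl
      _ = ((‖y k‖ ^ 2 : ℝ) : ℂ) := by
          rw [inner_self_eq_norm_sq_to_K]; norm_cast
  have innerpp : ∀ s : Finset ℤ,
      ⟪∑ k ∈ s, y k, ∑ k ∈ s, y k⟫_ℂ = ((∑ k ∈ s, ‖y k‖ ^ 2 : ℝ) : ℂ) := by
    intro s
    calc ⟪∑ k ∈ s, y k, ∑ k ∈ s, y k⟫_ℂ
        = ∑ j ∈ s, ∑ k ∈ s, ⟪y j, y k⟫_ℂ := by
          rw [sum_inner]
          exact Finset.sum_congr rfl fun j _ => inner_sum s y (y j)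
      _ = ∑ j ∈ s, ⟪y j, y j⟫_ℂ :=
          Finset.sum_congr rfl fun j hj =>
            Finset.sum_eq_single_of_mem j hj fun k _ hkj => orth j k (Ne.symm hkj)
      _ = ((∑ k ∈ s, ‖y k‖ ^ 2 : ℝ) : ℂ) := by
          push_cast
          exact Finset.sum_congr rfl fun j _ => inner_self_eq_norm_sq_to_K (y j)
  have pyth : ∀ s : Finset ℤ, ‖∑ k ∈ s, y k‖ ^ 2 = ∑ k ∈ s, ‖y k‖ ^ 2 := by
    intro s
    have h := innerpp s
    rw [inner_self_eq_norm_sq_to_K] at h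
    have h2 : ((‖∑ k ∈ s, y k‖ : ℝ) : ℂ) ^ 2 = ((∑ k ∈ s, ‖y k‖ ^ 2 : ℝ) : ℂ) := h
    exact_mod_cast h2
  have bessel : ∀ s : Finset ℤ, ∑ k ∈ s, ‖y k‖ ^ 2 ≤ ‖x‖ ^ 2 := by
    intro s
    have hpx : ⟪∑ k ∈ s, y k, x⟫_ℂ = ((∑ k ∈ s, ‖y k‖ ^ 2 : ℝ) : ℂ) := by
      rw [sum_inner]
      rw [Finset.sum_congr rfl fun k _ => hself k]
      push_cast
      ring
    have hexp : ⟪x - ∑ k ∈ s, y k, x - ∑ k ∈ s, y k⟫_ℂ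
        = ⟪x, x⟫_ℂ - ((∑ k ∈ s, ‖y k‖ ^ 2 : ℝ) : ℂ) := by
      have hconj : ⟪x, ∑ k ∈ s, y k⟫_ℂ = ((∑ k ∈ s, ‖y k‖ ^ 2 : ℝ) : ℂ) := by
        rw [← inner_conj_symm, hpx, Complex.conj_ofReal]
      rw [inner_sub_left, inner_sub_right, inner_sub_right, innerpp s, hpx, hconj]
      ring
    have hx2 : ⟪x, x⟫_ℂ = ((‖x‖ ^ 2 : ℝ) : ℂ) := by
      rw [inner_self_eq_norm_sq_to_K]; norm_cast
    have hxp2 : ⟪x - ∑ k ∈ s, y k, x - ∑ k ∈ s, y k⟫_ℂ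
        = ((‖x - ∑ k ∈ s, y k‖ ^ 2 : ℝ) : ℂ) := by
      rw [inner_self_eq_norm_sq_to_K]; norm_cast
    rw [hxp2, hx2] at hexp
    have h3 : ‖x - ∑ k ∈ s, y k‖ ^ 2 = ‖x‖ ^ 2 - ∑ k ∈ s, ‖y k‖ ^ 2 := by
      apply Complex.ofReal_injective
      push_cast
      exact_mod_cast hexp
    have h4 : (0 : ℝ) ≤ ‖x - ∑ k ∈ s, y k‖ ^ 2 := sq_nonneg _
    linarith
  have hsq : Summable (fun k : ℤ => ‖y k‖ ^ 2) :=
    summable_of_sum_le (fun k => sq_nonneg _) bessel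
  -- summability of the orthogonal family
  have hV : OrthogonalFamily ℂ (fun k : ℤ => (ℂ ∙ y k : Submodule ℂ H))
      (fun k => (ℂ ∙ y k : Submodule ℂ H).subtypeₗᵢ) := by
    intro j k hjk u v
    obtain ⟨a, ha⟩ := Submodule.mem_span_singleton.mp u.2
    obtain ⟨b, hb⟩ := Submodule.mem_span_singleton.mp v.2
    show ⟪(u : H), (v : H)⟫_ℂ = 0
    rw [← ha, ← hb, inner_smul_left, inner_smul_right, orth j k hjk]
    ring
  have hsummable : Summable y := by
    have := (hV.summable_iff_norm_sq_summable
      (fun k => ⟨y k, Submodule.mem_span_singleton_self _⟩)).mpr hsq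
    exact this
  have hysum := hsummable.hasSum
  -- identify the sum with x
  have hPhiY : ∀ k : ℤ, Stmt2Aux.Phi μ γ k (∑' j, y j) = y k := by
    intro k
    have h1 : HasSum (fun j => Stmt2Aux.Phi μ γ k (y j))
        (Stmt2Aux.Phi μ γ k (∑' j, y j)) :=
      (Stmt2Aux.PhiCLM μ γ hγu hγc k).hasSum hysum
    have h2 : HasSum (fun j => Stmt2Aux.Phi μ γ k (y j)) (y k) := by
      have heq : (fun j => Stmt2Aux.Phi μ γ k (y j))
          = fun j => if j = k then y k else 0 := by
        funext j
        rw [PhiPhi k j]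
        by_cases hjk : j = k
        · subst hjk; simp
        · rw [if_neg (Ne.symm hjk), if_neg hjk]
      rw [heq]
      exact hasSum_ite_eq k (y k)
    exact (h2.unique h1).symm
  have hwzero : x - ∑' j, y j = 0 := by
    refine Stmt2Aux.eq_zero_of_coeffs_vanish μ γ hγu hγ1 hγm hγc _ (fun k => ?_)
    have hPsub : Stmt2Aux.Phi μ γ k (x - ∑' j, y j)
        = Stmt2Aux.Phi μ γ k x - Stmt2Aux.Phi μ γ k (∑' j, y j) :=
      map_sub (Stmt2Aux.PhiCLM μ γ hγu hγc k) x (∑' j, y j)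
    rw [hPsub, hPhiY k]
    exact sub_self (y k)
  have hxsum : HasSum y x := by
    have : ∑' j, y j = x := by
      have := sub_eq_zero.mp hwzero
      exact this.symm
    rwa [this] at hysum
  refine ⟨hxsum, ?_⟩
  have hnorm : HasSum (fun k : ℤ => ‖y k‖ ^ 2) (‖x‖ ^ 2) := by
    have ht : Filter.Tendsto (fun s : Finset ℤ => ‖∑ k ∈ s, y k‖ ^ 2)
        Filter.atTop (nhds (‖x‖ ^ 2)) :=
      ((continuous_norm.pow 2).tendsto x).comp hxsum
    exact ht.congr pyth
  exact hnorm.tsum_eq.symm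
end

section
/- Let m ∈ ℤ and let T be a bounded operator on H satisfying T ∘ P_k = P_{k+m} ∘ T for all k ∈ ℤ. Then T maps Dom(D) into Dom(D), and for every x ∈ Dom(D) one has D(T x) − T(D x) = m · T x. Consequently the commutator [D, T] extends to a bounded operator on H whose operator norm equals |m| · ‖T‖. -/
set_option linter.unusedSectionVars false
set_option maxHeartbeats 1000000

section aux

variable {H : Type*} [NormedAddCommGroup H] [InnerProductSpace ℂ H] [CompleteSpace H]

local notation "⟪" x ", " y "⟫" => @inner ℂ _ _ x y

lemma aux_inner_orth (P : ℤ → H →L[ℂ] H)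
    (hsa : ∀ k, IsSelfAdjoint (P k))
    (horth : ∀ k l, k ≠ l → P k ∘L P l = 0)
    {k l : ℤ} (hkl : k ≠ l) (x y : H) : ⟪P k x, P l y⟫ = 0 := by
  have hsym := (ContinuousLinearMap.isSelfAdjoint_iff_isSymmetric.mp (hsa k)) x (P l y)
  have h0 : P k (P l y) = 0 := by
    have := congrArg (fun A : H →L[ℂ] H => A y) (horth k l hkl)
    simpa using this
  refine hsym.trans ?_
  show (inner ℂ x ((P k) ((P l) y)) : ℂ) = 0
  rw [h0, inner_zero_right]

lemma aux_inner_self_sum {f : ℤ → H} (h : ∀ k l, k ≠ l → ⟪f k, f l⟫ = 0)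
    (s : Finset ℤ) : ⟪∑ k ∈ s, f k, ∑ l ∈ s, f l⟫ = ∑ k ∈ s, ⟪f k, f k⟫ := by
  classical
  rw [sum_inner]
  refine Finset.sum_congr rfl fun k hk => ?_
  rw [inner_sum, Finset.sum_eq_single k (fun l _ hne => h k l hne.symm)
    (fun hk' => absurd hk hk')]

/-- Pythagoras for finite sums of pairwise orthogonal vectors. -/
lemma aux_pythagoras {f : ℤ → H} (h : ∀ k l, k ≠ l → ⟪f k, f l⟫ = 0)
    (s : Finset ℤ) : ‖∑ k ∈ s, f k‖ ^ 2 = ∑ k ∈ s, ‖f k‖ ^ 2 := by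
  classical
  have key := aux_inner_self_sum h s
  calc ‖∑ k ∈ s, f k‖ ^ 2 = RCLike.re ⟪∑ k ∈ s, f k, ∑ l ∈ s, f l⟫ :=
        InnerProductSpace.norm_sq_eq_re_inner (𝕜 := ℂ) _
    _ = ∑ k ∈ s, RCLike.re ⟪f k, f k⟫ := by rw [key, map_sum]
    _ = ∑ k ∈ s, ‖f k‖ ^ 2 := by
        refine Finset.sum_congr rfl fun k _ => (InnerProductSpace.norm_sq_eq_re_inner (𝕜 := ℂ) _).symm

/-- An orthogonal family with square-summable norms is summable. -/
lemma aux_summable_of_sq {f : ℤ → H} (h : ∀ k l, k ≠ l → ⟪f k, f l⟫ = 0)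
    (hs : Summable fun k => ‖f k‖ ^ 2) : Summable f := by
  rw [summable_iff_vanishing_norm]
  intro ε hε
  obtain ⟨s, hsv⟩ := summable_iff_vanishing_norm.mp hs (ε ^ 2) (by positivity)
  refine ⟨s, fun t ht => ?_⟩
  have h1 := hsv t ht
  have h2 : ‖∑ k ∈ t, f k‖ ^ 2 < ε ^ 2 := by
    rw [aux_pythagoras h t]
    calc ∑ k ∈ t, ‖f k‖ ^ 2 ≤ |∑ k ∈ t, ‖f k‖ ^ 2| := le_abs_self _
      _ < ε ^ 2 := by simpa [Real.norm_eq_abs] using h1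
  nlinarith [norm_nonneg (∑ k ∈ t, f k)]

/-- Square norms of the projections are summable. -/
lemma aux_sq_summable (P : ℤ → H →L[ℂ] H)
    (hsa : ∀ k, IsSelfAdjoint (P k))
    (hidem : ∀ k, P k ∘L P k = P k)
    (horth : ∀ k l, k ≠ l → P k ∘L P l = 0)
    (x : H) : Summable fun k : ℤ => ‖P k x‖ ^ 2 := by
  refine summable_of_sum_le (c := ‖x‖ ^ 2) (fun k => by positivity) fun s => ?_
  set y := ∑ k ∈ s, P k x with hy
  have hpyth : ‖y‖ ^ 2 = ∑ k ∈ s, ‖P k x‖ ^ 2 :=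
    aux_pythagoras (fun k l hkl => aux_inner_orth P hsa horth hkl x x) s
  have hyy : (⟪y, y⟫ : ℂ) = ∑ k ∈ s, ⟪P k x, P k x⟫ :=
    aux_inner_self_sum (fun k l hkl => aux_inner_orth P hsa horth hkl x x) s
  have hxy : (⟪x, y⟫ : ℂ) = ⟪y, y⟫ := by
    rw [hyy, hy, inner_sum]
    refine Finset.sum_congr rfl fun k hk => ?_
    have hsym := (ContinuousLinearMap.isSelfAdjoint_iff_isSymmetric.mp (hsa k)) x (P k x)
    have hkk : P k (P k x) = P k x := by
      have := congrArg (fun A : H →L[ℂ] H => A x) (hidem k)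
      simpa using this
    calc (⟪x, P k x⟫ : ℂ) = ⟪x, P k (P k x)⟫ := by rw [hkk]
      _ = ⟪P k x, P k x⟫ := hsym.symm
  have hns : ‖y‖ ^ 2 = RCLike.re (⟪y, y⟫ : ℂ) := InnerProductSpace.norm_sq_eq_re_inner (𝕜 := ℂ) _
  have hle : ‖y‖ ^ 2 ≤ ‖x‖ * ‖y‖ := by
    rw [hns, ← hxy]
    calc RCLike.re (⟪x, y⟫ : ℂ) ≤ ‖(⟪x, y⟫ : ℂ)‖ := RCLike.re_le_norm _
      _ ≤ ‖x‖ * ‖y‖ := norm_inner_le_norm x y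
  rw [← hpyth]
  nlinarith [norm_nonneg y, norm_nonneg x]

end aux


/-- With `(P k)` mutually orthogonal projections summing strongly to the identity
on a complex Hilbert space `H`, let `D x = ∑' k, k • P k x` on the domain
`Dom D = {x | Summable (fun k => k² ‖P k x‖²)}`.  If `T` is bounded with `T ∘ P k = P (k+m) ∘ T`
for all `k`, then `T` maps `Dom D` into `Dom D`, `D (T x) - T (D x) = m • T x` on `Dom D`, and the
commutator `[D, T]` extends to a bounded operator of norm exactly `|m| ‖T‖`. -/
theorem stmt3
    (H : Type*) [NormedAddCommGroup H] [InnerProductSpace ℂ H] [CompleteSpace H]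
    (P : ℤ → H →L[ℂ] H)
    (hsa : ∀ k, IsSelfAdjoint (P k))
    (hidem : ∀ k, P k ∘L P k = P k)
    (horth : ∀ k l, k ≠ l → P k ∘L P l = 0)
    (hsum : ∀ x : H, HasSum (fun k : ℤ => P k x) x)
    (T : H →L[ℂ] H) (m : ℤ)
    (hT : ∀ k : ℤ, T ∘L P k = P (k + m) ∘L T) :
    (∀ x : H, Summable (fun k : ℤ => (k : ℝ) ^ 2 * ‖P k x‖ ^ 2) →
      Summable fun k : ℤ => (k : ℝ) ^ 2 * ‖P k (T x)‖ ^ 2) ∧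
    (∀ x : H, Summable (fun k : ℤ => (k : ℝ) ^ 2 * ‖P k x‖ ^ 2) →
      (∑' k : ℤ, (k : ℂ) • P k (T x)) - T (∑' k : ℤ, (k : ℂ) • P k x) = (m : ℂ) • T x) ∧
    ∃ B : H →L[ℂ] H,
      (∀ x : H, Summable (fun k : ℤ => (k : ℝ) ^ 2 * ‖P k x‖ ^ 2) →
        B x = (∑' k : ℤ, (k : ℂ) • P k (T x)) - T (∑' k : ℤ, (k : ℂ) • P k x)) ∧
      ‖B‖ = |(m : ℝ)| * ‖T‖ := by
  -- intertwining pointwise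
  have hTP : ∀ k : ℤ, ∀ y : H, P k (T y) = T (P (k - m) y) := by
    intro k y
    have := congrArg (fun A : H →L[ℂ] H => A y) (hT (k - m))
    simp only [ContinuousLinearMap.comp_apply, sub_add_cancel] at this
    exact this.symm
  -- part 1
  have part1 : ∀ x : H, Summable (fun k : ℤ => (k : ℝ) ^ 2 * ‖P k x‖ ^ 2) →
      Summable fun k : ℤ => (k : ℝ) ^ 2 * ‖P k (T x)‖ ^ 2 := by
    intro x hx
    have hb : Summable fun k : ℤ =>
        2 * ‖T‖ ^ 2 * ((k : ℝ) ^ 2 * ‖P k x‖ ^ 2) + 2 * ‖T‖ ^ 2 * (m : ℝ) ^ 2 * ‖P k x‖ ^ 2 :=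
      (hx.mul_left _).add ((aux_sq_summable P hsa hidem horth x).mul_left _)
    have hb' : Summable fun k : ℤ =>
        ‖T‖ ^ 2 * (((k + m : ℤ) : ℝ) ^ 2 * ‖P k x‖ ^ 2) := by
      refine hb.of_nonneg_of_le (fun k => by positivity) fun k => ?_
      have hsq : (((k + m : ℤ) : ℝ)) ^ 2 ≤ 2 * (k : ℝ) ^ 2 + 2 * (m : ℝ) ^ 2 := by
        push_cast
        nlinarith [sq_nonneg ((k : ℝ) - (m : ℝ))]
      nlinarith [mul_le_mul_of_nonneg_left hsq
        (by positivity : (0:ℝ) ≤ ‖T‖ ^ 2 * ‖P k x‖ ^ 2)]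
    have hre : Summable fun k : ℤ =>
        ‖T‖ ^ 2 * ((k : ℝ) ^ 2 * ‖P (k - m) x‖ ^ 2) := by
      have hco : (fun k : ℤ => ‖T‖ ^ 2 * (((k + m : ℤ) : ℝ) ^ 2 * ‖P k x‖ ^ 2)) =
          (fun k : ℤ => ‖T‖ ^ 2 * ((k : ℝ) ^ 2 * ‖P (k - m) x‖ ^ 2)) ∘
            (Equiv.addRight m) := by
        funext k
        simp [Function.comp, add_sub_cancel_right]
      exact ((Equiv.addRight m).summable_iff).mp (hco ▸ hb')
    refine hre.of_nonneg_of_le (fun k => by positivity) fun k => ?_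
    have h1 : ‖P k (T x)‖ ≤ ‖T‖ * ‖P (k - m) x‖ := by
      rw [hTP k x]; exact T.le_opNorm _
    have h2 : ‖P k (T x)‖ ^ 2 ≤ ‖T‖ ^ 2 * ‖P (k - m) x‖ ^ 2 := by
      nlinarith [norm_nonneg (P k (T x))]
    nlinarith [mul_le_mul_of_nonneg_left h2 (sq_nonneg ((k : ℝ)))]
  have orthf : ∀ (y : H) (k l : ℤ), k ≠ l →
      (inner ℂ ((k : ℂ) • P k y) ((l : ℂ) • P l y) : ℂ) = 0 := by
    intro y k l hkl
    rw [inner_smul_left, inner_smul_right, aux_inner_orth P hsa horth hkl]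
    ring
  have normf : ∀ (y : H) (k : ℤ), ‖(k : ℂ) • P k y‖ ^ 2 = (k : ℝ) ^ 2 * ‖P k y‖ ^ 2 := by
    intro y k
    rw [norm_smul, mul_pow]
    norm_num [Complex.norm_intCast, sq_abs]
  have part2 : ∀ x : H, Summable (fun k : ℤ => (k : ℝ) ^ 2 * ‖P k x‖ ^ 2) →
      (∑' k : ℤ, (k : ℂ) • P k (T x)) - T (∑' k : ℤ, (k : ℂ) • P k x) = (m : ℂ) • T x := by
    intro x hx
    have hDx : Summable fun k : ℤ => (k : ℂ) • P k x :=
      aux_summable_of_sq (orthf x) (by simpa only [normf] using hx)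
    have hDTx : Summable fun k : ℤ => (k : ℂ) • P k (T x) :=
      aux_summable_of_sq (orthf (T x)) (by simpa only [normf] using part1 x hx)
    have hTP2 : ∀ k : ℤ, T (P k x) = P (k + m) (T x) := by
      intro k
      have := congrArg (fun A : H →L[ℂ] H => A x) (hT k)
      simpa using this
    have hTs : HasSum (fun k : ℤ => (k : ℂ) • P (k + m) (T x))
        (T (∑' k : ℤ, (k : ℂ) • P k x)) := by
      have := hDx.hasSum.mapL T
      simpa only [map_smul, hTP2] using this
    have hfe : (fun k : ℤ => (k : ℂ) • P (k + m) (T x)) =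
        (fun j : ℤ => ((j - m : ℤ) : ℂ) • P j (T x)) ∘ (Equiv.addRight m) := by
      funext k
      simp [Function.comp, add_sub_cancel_right]
    have hf : HasSum (fun j : ℤ => ((j - m : ℤ) : ℂ) • P j (T x))
        (T (∑' k : ℤ, (k : ℂ) • P k x)) :=
      ((Equiv.addRight m).hasSum_iff).mp (hfe ▸ hTs)
    have hsub := hDTx.hasSum.sub hf
    have hsummand : (fun j : ℤ => (j : ℂ) • P j (T x) - ((j - m : ℤ) : ℂ) • P j (T x)) =
        fun j : ℤ => (m : ℂ) • P j (T x) := by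
      funext j
      rw [← sub_smul]
      push_cast
      ring_nf
    rw [hsummand] at hsub
    have hms : HasSum (fun j : ℤ => (m : ℂ) • P j (T x)) ((m : ℂ) • T x) :=
      (hsum (T x)).const_smul ((m : ℂ))
    exact hsub.unique hms
  refine ⟨part1, part2, (m : ℂ) • T, fun x hx => ?_, ?_⟩
  · rw [part2 x hx]
    simp
  · rw [norm_smul]
    simp [Complex.norm_intCast]
end

section
/- Let m ∈ ℤ and let T be a bounded operator on H satisfying T ∘ P_k = P_{k+m} ∘ T for all k ∈ ℤ. Let |D| be the unbounded operator with domain Dom(D) defined by |D| x = Σ_{k∈ℤ} |k| · P_k x. Then T maps Dom(D) into Dom(D) and for every x ∈ Dom(D) one has ‖|D|(T x) − T(|D| x)‖ ≤ |m| · ‖T‖ · ‖x‖; hence the commutator [|D|, T] extends to a bounded operator of norm at most |m| · ‖T‖. -/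
open scoped ComplexConjugate

section helpers
variable {H : Type*} [NormedAddCommGroup H] [InnerProductSpace ℂ H] [CompleteSpace H]
  {P : ℤ → H →L[ℂ] H}

lemma aux_inner (hsa : ∀ k, IsSelfAdjoint (P k)) (horth : ∀ k l, k ≠ l → P k ∘L P l = 0)
    {k l : ℤ} (h : k ≠ l) (a b : H) : (inner ℂ (P k a) (P l b) : ℂ) = 0 := by
  have h1 := (hsa k).isSymmetric a (P l b)
  simp only [ContinuousLinearMap.coe_coe] at h1
  have h2 : P k (P l b) = 0 := by
    have := horth k l h
    calc P k (P l b) = (P k ∘L P l) b := rfl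
    _ = 0 := by rw [this]; rfl
  rw [h1, h2, inner_zero_right]

/-- norm-squares of a pairwise orthogonal summable family sum to the norm-square. -/
lemma aux_norm_sq (v : ℤ → H) (hv : ∀ k l, k ≠ l → (inner ℂ (v k) (v l) : ℂ) = 0)
    {s : H} (h : HasSum v s) : HasSum (fun k => ‖v k‖ ^ 2) (‖s‖ ^ 2) := by
  have h2 : ∀ k, (inner ℂ (v k) s : ℂ) = (‖v k‖ ^ 2 : ℝ) := by
    intro k
    have hh := (innerSL ℂ (v k)).hasSum h
    have h3 : HasSum (fun l => (innerSL ℂ (v k)) (v l)) ((‖v k‖ ^ 2 : ℝ) : ℂ) := by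
      have : (fun l => (innerSL ℂ (v k)) (v l)) =
          fun l => if l = k then ((‖v k‖ ^ 2 : ℝ) : ℂ) else 0 := by
        funext l
        by_cases hl : l = k
        · subst hl; simp [innerSL_apply_apply, inner_self_eq_norm_sq_to_K]
        · simp [hl, innerSL_apply_apply, hv k l (Ne.symm hl)]
      rw [this]
      exact hasSum_ite_eq k _
    exact (h3.unique hh).symm
  have h1 : HasSum (fun k => (innerSL ℂ s) (v k)) ((innerSL ℂ s) s) := (innerSL ℂ s).hasSum h
  have h4 : HasSum (fun k => ((‖v k‖ ^ 2 : ℝ) : ℂ)) ((‖s‖ ^ 2 : ℝ) : ℂ) := by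
    have e1 : (fun k => ((‖v k‖ ^ 2 : ℝ) : ℂ)) = fun k => (innerSL ℂ s) (v k) := by
      funext k
      simp only [innerSL_apply_apply]
      rw [← inner_conj_symm, h2 k]
      simp
    rw [e1]
    have : ((innerSL ℂ s) s) = ((‖s‖ ^ 2 : ℝ) : ℂ) := by
      simp [innerSL_apply_apply, inner_self_eq_norm_sq_to_K]
    rwa [← this]
  have := Complex.reCLM.hasSum h4
  simpa [← Complex.ofReal_pow] using this

lemma aux_parseval (hsa : ∀ k, IsSelfAdjoint (P k)) (horth : ∀ k l, k ≠ l → P k ∘L P l = 0)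
    (hsum : ∀ x : H, HasSum (fun k : ℤ => P k x) x) (x : H) :
    HasSum (fun k : ℤ => ‖P k x‖ ^ 2) (‖x‖ ^ 2) :=
  aux_norm_sq _ (fun k l h => aux_inner hsa horth h x x) (hsum x)

/-- summability of scaled projections, given square-summability of coefficients. -/
lemma aux_summable (hsa : ∀ k, IsSelfAdjoint (P k)) (horth : ∀ k l, k ≠ l → P k ∘L P l = 0)
    (c : ℤ → ℝ) (x : H)
    (hc : Summable (fun k => (c k) ^ 2 * ‖P k x‖ ^ 2)) :
    Summable (fun k : ℤ => ((c k : ℝ) : ℂ) • P k x) := by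
  set V : ∀ k : ℤ, (LinearMap.range ((P k).toLinearMap) : Submodule ℂ H) →ₗᵢ[ℂ] H :=
    fun k => (LinearMap.range ((P k).toLinearMap)).subtypeₗᵢ with hV
  have hOF : OrthogonalFamily ℂ (fun k => (LinearMap.range ((P k).toLinearMap) : Submodule ℂ H)) V := by
    intro k l h v w
    obtain ⟨a, ha⟩ := v.2
    obtain ⟨b, hb⟩ := w.2
    have : (V k v : H) = P k a := ha ▸ rfl
    have hw : (V l w : H) = P l b := hb ▸ rfl
    simp only [this, hw]
    exact aux_inner hsa horth h a b
  set f : ∀ k : ℤ, (LinearMap.range ((P k).toLinearMap) : Submodule ℂ H) :=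
    fun k => ⟨((c k : ℝ) : ℂ) • P k x, ⟨((c k : ℝ) : ℂ) • x, by simp⟩⟩ with hf
  have := (hOF.summable_iff_norm_sq_summable f).2 ?_
  · exact this
  · apply hc.congr
    intro k
    simp [hf, norm_smul, mul_pow, sq_abs]


/-- the operator `x ↦ ∑' k, c k • P k x` for bounded coefficients. -/
lemma aux_op (hsa : ∀ k, IsSelfAdjoint (P k)) (horth : ∀ k l, k ≠ l → P k ∘L P l = 0)
    (hsum : ∀ x : H, HasSum (fun k : ℤ => P k x) x)
    (c : ℤ → ℝ) (C : ℝ) (hC : 0 ≤ C) (hc : ∀ k, |c k| ≤ C) :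
    ∃ A : H →L[ℂ] H, (∀ x, A x = ∑' k : ℤ, ((c k : ℝ) : ℂ) • P k x) ∧ ‖A‖ ≤ C := by
  have hsq : ∀ x : H, Summable (fun k => (c k) ^ 2 * ‖P k x‖ ^ 2) := by
    intro x
    apply Summable.of_nonneg_of_le (fun k => by positivity)
      (fun k => ?_) (((aux_parseval hsa horth hsum x).summable).mul_left (C ^ 2))
    have h1 : (c k) ^ 2 ≤ C ^ 2 := by
      have := hc k
      nlinarith [abs_nonneg (c k), neg_abs_le (c k), le_abs_self (c k)]
    nlinarith [sq_nonneg ‖P k x‖]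
  have hS : ∀ x : H, Summable (fun k : ℤ => ((c k : ℝ) : ℂ) • P k x) :=
    fun x => aux_summable hsa horth c x (hsq x)
  have hbound : ∀ x : H, ‖∑' k : ℤ, ((c k : ℝ) : ℂ) • P k x‖ ≤ C * ‖x‖ := by
    intro x
    have horthv : ∀ k l, k ≠ l →
        (inner ℂ (((c k : ℝ) : ℂ) • P k x) (((c l : ℝ) : ℂ) • P l x) : ℂ) = 0 := by
      intro k l h
      rw [inner_smul_left, inner_smul_right, aux_inner hsa horth h x x]
      simp
    have hns := aux_norm_sq _ horthv (hS x).hasSum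
    have hle : ‖∑' k : ℤ, ((c k : ℝ) : ℂ) • P k x‖ ^ 2 ≤ C ^ 2 * ‖x‖ ^ 2 := by
      have h1 : (∑' k : ℤ, ‖((c k : ℝ) : ℂ) • P k x‖ ^ 2) ≤ ∑' k : ℤ, C ^ 2 * ‖P k x‖ ^ 2 := by
        apply Summable.tsum_le_tsum _ hns.summable
          (((aux_parseval hsa horth hsum x).summable).mul_left (C ^ 2))
        intro k
        have h1 : (c k) ^ 2 ≤ C ^ 2 := by
          nlinarith [hc k, abs_nonneg (c k), neg_abs_le (c k), le_abs_self (c k)]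
        have : ‖((c k : ℝ) : ℂ) • P k x‖ ^ 2 = (c k) ^ 2 * ‖P k x‖ ^ 2 := by
          simp [norm_smul, mul_pow, sq_abs]
        rw [this]
        nlinarith [sq_nonneg ‖P k x‖]
      calc ‖∑' k : ℤ, ((c k : ℝ) : ℂ) • P k x‖ ^ 2
          = ∑' k : ℤ, ‖((c k : ℝ) : ℂ) • P k x‖ ^ 2 := hns.tsum_eq.symm
        _ ≤ ∑' k : ℤ, C ^ 2 * ‖P k x‖ ^ 2 := h1
        _ = C ^ 2 * ∑' k : ℤ, ‖P k x‖ ^ 2 := by rw [tsum_mul_left]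
        _ = C ^ 2 * ‖x‖ ^ 2 := by rw [(aux_parseval hsa horth hsum x).tsum_eq]
    nlinarith [norm_nonneg (∑' k : ℤ, ((c k : ℝ) : ℂ) • P k x), norm_nonneg x,
      mul_nonneg hC (norm_nonneg x)]
  set Alin : H →ₗ[ℂ] H :=
    { toFun := fun x => ∑' k : ℤ, ((c k : ℝ) : ℂ) • P k x
      map_add' := by
        intro x y
        show (∑' k : ℤ, ((c k : ℝ) : ℂ) • P k (x + y)) = _
        rw [show (fun k : ℤ => ((c k : ℝ) : ℂ) • P k (x + y)) =
            fun k => ((c k : ℝ) : ℂ) • P k x + ((c k : ℝ) : ℂ) • P k y from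
          funext fun k => by rw [map_add, smul_add]]
        exact Summable.tsum_add (hS x) (hS y)
      map_smul' := by
        intro a x
        show (∑' k : ℤ, ((c k : ℝ) : ℂ) • P k (a • x)) = a • _
        rw [show (fun k : ℤ => ((c k : ℝ) : ℂ) • P k (a • x)) =
            fun k => a • (((c k : ℝ) : ℂ) • P k x) from
          funext fun k => by rw [map_smul, smul_comm]]
        exact (((hS x).hasSum).const_smul a).tsum_eq } with hA
  refine ⟨Alin.mkContinuous C hbound, fun x => rfl, Alin.mkContinuous_norm_le hC hbound⟩

end helpers

/-- With `(P k)` mutually orthogonal projections summing strongly to the identity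
on a complex Hilbert space `H`, let `|D| x = ∑' k, |k| • P k x` on the domain
`Dom D = {x | Summable (fun k => k² ‖P k x‖²)}`.  If `T` is bounded with `T ∘ P k = P (k+m) ∘ T`
for all `k`, then `T` maps `Dom D` into itself, `‖|D|(T x) - T(|D| x)‖ ≤ |m| ‖T‖ ‖x‖` on `Dom D`,
and the commutator `[|D|, T]` extends to a bounded operator of norm at most `|m| ‖T‖`. -/
theorem stmt4
    (H : Type*) [NormedAddCommGroup H] [InnerProductSpace ℂ H] [CompleteSpace H]
    (P : ℤ → H →L[ℂ] H)
    (hsa : ∀ k, IsSelfAdjoint (P k))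
    (hidem : ∀ k, P k ∘L P k = P k)
    (horth : ∀ k l, k ≠ l → P k ∘L P l = 0)
    (hsum : ∀ x : H, HasSum (fun k : ℤ => P k x) x)
    (T : H →L[ℂ] H) (m : ℤ)
    (hT : ∀ k : ℤ, T ∘L P k = P (k + m) ∘L T) :
    (∀ x : H, Summable (fun k : ℤ => (k : ℝ) ^ 2 * ‖P k x‖ ^ 2) →
      Summable fun k : ℤ => (k : ℝ) ^ 2 * ‖P k (T x)‖ ^ 2) ∧
    (∀ x : H, Summable (fun k : ℤ => (k : ℝ) ^ 2 * ‖P k x‖ ^ 2) →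
      ‖(∑' k : ℤ, ((|k| : ℤ) : ℂ) • P k (T x)) - T (∑' k : ℤ, ((|k| : ℤ) : ℂ) • P k x)‖ ≤
        |(m : ℝ)| * ‖T‖ * ‖x‖) ∧
    ∃ B : H →L[ℂ] H,
      (∀ x : H, Summable (fun k : ℤ => (k : ℝ) ^ 2 * ‖P k x‖ ^ 2) →
        B x = (∑' k : ℤ, ((|k| : ℤ) : ℂ) • P k (T x)) -
          T (∑' k : ℤ, ((|k| : ℤ) : ℂ) • P k x)) ∧
      ‖B‖ ≤ |(m : ℝ)| * ‖T‖ := by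
  have hpar : ∀ x : H, Summable (fun k : ℤ => ‖P k x‖ ^ 2) :=
    fun x => (aux_parseval hsa horth hsum x).summable
  have hPT : ∀ (x : H) (k : ℤ), P k (T x) = T (P (k - m) x) := by
    intro x k
    have h := hT (k - m)
    rw [sub_add_cancel] at h
    exact (congrFun (congrArg DFunLike.coe h) x).symm
  -- Part 1
  have part1 : ∀ x : H, Summable (fun k : ℤ => (k : ℝ) ^ 2 * ‖P k x‖ ^ 2) →
      Summable fun k : ℤ => (k : ℝ) ^ 2 * ‖P k (T x)‖ ^ 2 := by
    intro x hx
    have hF : Summable (fun j : ℤ => 2 * ‖T‖ ^ 2 * ((j : ℝ) ^ 2 * ‖P j x‖ ^ 2)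
        + (2 * (m : ℝ) ^ 2 * ‖T‖ ^ 2) * ‖P j x‖ ^ 2) :=
      (hx.mul_left _).add ((hpar x).mul_left _)
    have hF2' := ((Equiv.subRight m).summable_iff
      (f := fun j : ℤ => 2 * ‖T‖ ^ 2 * ((j : ℝ) ^ 2 * ‖P j x‖ ^ 2)
        + (2 * (m : ℝ) ^ 2 * ‖T‖ ^ 2) * ‖P j x‖ ^ 2)).2 hF
    have hF2 : Summable (fun k : ℤ => 2 * ‖T‖ ^ 2 * (((k - m : ℤ) : ℝ) ^ 2 * ‖P (k - m) x‖ ^ 2)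
        + (2 * (m : ℝ) ^ 2 * ‖T‖ ^ 2) * ‖P (k - m) x‖ ^ 2) :=
      hF2'.congr fun k => rfl
    apply Summable.of_nonneg_of_le (fun k => by positivity) (fun k => ?_) hF2
    have h1 : ‖P k (T x)‖ ≤ ‖T‖ * ‖P (k - m) x‖ := by
      rw [hPT]; exact T.le_opNorm _
    have h1sq : ‖P k (T x)‖ ^ 2 ≤ (‖T‖ * ‖P (k - m) x‖) ^ 2 :=
      pow_le_pow_left₀ (norm_nonneg _) h1 2
    have h2 : (k : ℝ) ^ 2 ≤ 2 * ((k - m : ℤ) : ℝ) ^ 2 + 2 * (m : ℝ) ^ 2 := by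
      push_cast
      nlinarith [sq_nonneg ((k : ℝ) - 2 * (m : ℝ))]
    nlinarith [h1sq, h2, sq_nonneg ((k : ℝ)), sq_nonneg ‖T‖, sq_nonneg ‖P (k - m) x‖,
      mul_nonneg (sq_nonneg ‖T‖) (sq_nonneg ‖P (k - m) x‖), sq_nonneg ‖P k (T x)‖]
  -- the key identity
  have key : ∀ x : H, Summable (fun k : ℤ => (k : ℝ) ^ 2 * ‖P k x‖ ^ 2) →
      (∑' k : ℤ, ((|k| : ℤ) : ℂ) • P k (T x)) - T (∑' k : ℤ, ((|k| : ℤ) : ℂ) • P k x)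
        = ∑' k : ℤ, (((|k| - |k - m| : ℤ) : ℝ) : ℂ) • P k (T x) := by
    intro x hx
    have hxT := part1 x hx
    have hS1 : Summable (fun k : ℤ => ((|k| : ℤ) : ℂ) • P k x) := by
      have := aux_summable hsa horth (fun k : ℤ => ((|k| : ℤ) : ℝ)) x
        (hx.congr fun k => by push_cast [sq_abs]; ring)
      exact this.congr fun k => by rw [Complex.ofReal_intCast]
    have hS2 : Summable (fun k : ℤ => ((|k| : ℤ) : ℂ) • P k (T x)) := by
      have := aux_summable hsa horth (fun k : ℤ => ((|k| : ℤ) : ℝ)) (T x)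
        (hxT.congr fun k => by push_cast [sq_abs]; ring)
      exact this.congr fun k => by rw [Complex.ofReal_intCast]
    have hA : HasSum (fun k : ℤ => ((|k| : ℤ) : ℂ) • P (k + m) (T x))
        (T (∑' k : ℤ, ((|k| : ℤ) : ℂ) • P k x)) := by
      have h0 := T.hasSum hS1.hasSum
      have e : (fun k : ℤ => T (((|k| : ℤ) : ℂ) • P k x)) =
          fun k : ℤ => ((|k| : ℤ) : ℂ) • P (k + m) (T x) := by
        funext k
        rw [map_smul]
        congr 1
        exact congrFun (congrArg DFunLike.coe (hT k)) x
      rwa [e] at h0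
    set g : ℤ → H := fun j => ((|j - m| : ℤ) : ℂ) • P j (T x) with hg
    have hgsum : HasSum g (T (∑' k : ℤ, ((|k| : ℤ) : ℂ) • P k x)) := by
      have e : (fun k : ℤ => ((|k| : ℤ) : ℂ) • P (k + m) (T x)) = g ∘ (Equiv.addRight m) := by
        funext k
        simp only [hg, Function.comp_apply, Equiv.coe_addRight, add_sub_cancel_right]
      rw [e] at hA
      exact (Equiv.addRight m).hasSum_iff.1 hA
    have hdiff := hS2.hasSum.sub hgsum
    have e2 : (fun k : ℤ => ((|k| : ℤ) : ℂ) • P k (T x) - g k)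
        = fun k : ℤ => (((|k| - |k - m| : ℤ) : ℝ) : ℂ) • P k (T x) := by
      funext k
      rw [hg, ← sub_smul]
      congr 1
      rw [Complex.ofReal_intCast]
      push_cast
      ring
    rw [e2] at hdiff
    exact hdiff.tsum_eq.symm
  -- the bounded operator
  obtain ⟨A, hAeq, hAnorm⟩ := aux_op hsa horth hsum (fun k : ℤ => ((|k| - |k - m| : ℤ) : ℝ))
    |(m : ℝ)| (abs_nonneg _) (fun k => by
      have h := abs_abs_sub_abs_le_abs_sub k (k - m)
      rw [sub_sub_cancel] at h
      show |((|k| - |k - m| : ℤ) : ℝ)| ≤ |(m : ℝ)|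
      exact_mod_cast h)
  set B : H →L[ℂ] H := A ∘L T with hB
  have hBeq : ∀ x : H, Summable (fun k : ℤ => (k : ℝ) ^ 2 * ‖P k x‖ ^ 2) →
      B x = (∑' k : ℤ, ((|k| : ℤ) : ℂ) • P k (T x)) -
        T (∑' k : ℤ, ((|k| : ℤ) : ℂ) • P k x) := by
    intro x hx
    rw [key x hx, hB]
    exact hAeq (T x)
  have hBnorm : ‖B‖ ≤ |(m : ℝ)| * ‖T‖ :=
    le_trans (ContinuousLinearMap.opNorm_comp_le A T)
      (mul_le_mul_of_nonneg_right hAnorm (norm_nonneg T))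
  refine ⟨part1, ?_, B, hBeq, hBnorm⟩
  intro x hx
  rw [← hBeq x hx]
  calc ‖B x‖ ≤ ‖B‖ * ‖x‖ := B.le_opNorm x
    _ ≤ (|(m : ℝ)| * ‖T‖) * ‖x‖ :=
      mul_le_mul_of_nonneg_right hBnorm (norm_nonneg x)
    _ = |(m : ℝ)| * ‖T‖ * ‖x‖ := by ring
end

section
/- Let v be a partial isometry (v v* v = v) in a unital C*-algebra A and let σ be a ℂ-algebra automorphism of A satisfying σ(v*v) = v*v, σ(v v*) = v v*, v σ(v*) ∈ F and v* σ(v) ∈ F, where F = {a ∈ A : σ(a) = a}. Then the self-adjoint unitary u_v = [[1 − v*v, v*], [v, 1 − v v*]] ∈ M₂(A) satisfies the modular condition with respect to σ: every entry of the matrices u_v · σ(u_v) and σ(u_v) · u_v lies in F, where σ is applied entrywise. -/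
/-- Let `v` be a partial isometry (`v v* v = v`) in a unital C*-algebra `A` and
`σ` a ℂ-algebra automorphism fixing `v*v` and `v v*` and with `v σ(v*), v* σ(v)` in the fixed-point
algebra `F = {a | σ a = a}`.  Then the self-adjoint unitary
`u_v = [[1 - v*v, v*], [v, 1 - v v*]] ∈ M₂(A)` satisfies the modular condition: every entry of
`u_v · σ(u_v)` and of `σ(u_v) · u_v` lies in `F` (σ applied entrywise). -/
theorem stmt8
    (A : Type*) [NormedRing A] [StarRing A] [CStarRing A] [NormedAlgebra ℂ A] [StarModule ℂ A]
    (σ : A ≃ₐ[ℂ] A)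
    (v : A) (hv : v * star v * v = v)
    (h1 : σ (star v * v) = star v * v)
    (h2 : σ (v * star v) = v * star v)
    (h3 : σ (v * σ (star v)) = v * σ (star v))
    (h4 : σ (star v * σ v) = star v * σ v) :
    ∀ i j : Fin 2,
      ((!![1 - star v * v, star v; v, 1 - v * star v] : Matrix (Fin 2) (Fin 2) A) *
          (!![1 - star v * v, star v; v, 1 - v * star v] : Matrix (Fin 2) (Fin 2) A).map ⇑σ) i j
        ∈ {a : A | σ a = a} ∧
      ((!![1 - star v * v, star v; v, 1 - v * star v] : Matrix (Fin 2) (Fin 2) A).map ⇑σ *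
          (!![1 - star v * v, star v; v, 1 - v * star v] : Matrix (Fin 2) (Fin 2) A)) i j
        ∈ {a : A | σ a = a} := by
  intro i j
  have hP : σ (1 - star v * v) = 1 - star v * v := by rw [map_sub, map_one, h1]
  have hQ : σ (1 - v * star v) = 1 - v * star v := by rw [map_sub, map_one, h2]
  have b : star v * v * star v = star v := by
    have h := congrArg star hv
    simpa [star_mul, mul_assoc] using h
  have b' : star v * (v * star v) = star v := by rw [← mul_assoc]; exact b
  have hv' : v * (star v * v) = v := by rw [← mul_assoc]; exact hv
  have hvv : σ (star v) * σ v = star v * v := by rw [← map_mul, h1]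
  have hvv2 : σ v * σ (star v) = v * star v := by rw [← map_mul, h2]
  have hA : σ v * σ (σ (star v)) = v * σ (star v) := by rw [← map_mul, h3]
  have hB : σ (star v) * σ (σ v) = star v * σ v := by rw [← map_mul, h4]
  have habs1 : star v * v * σ (star v) = σ (star v) := by
    have h := congrArg σ b; rw [map_mul, h1] at h; exact h
  have habs2 : v * star v * σ v = σ v := by
    have h := congrArg σ hv; rw [map_mul, h2] at h; exact h
  have habs3 : σ v * (star v * v) = σ v := by
    have h := congrArg σ hv'; rw [map_mul, h1] at h; exact h
  have habs4 : σ (star v) * (v * star v) = σ (star v) := by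
    have h := congrArg σ b'; rw [map_mul, h2] at h; exact h
  have s1 : star v * v * σ (σ (star v)) = σ (σ (star v)) := by
    have h := congrArg σ habs1; rw [map_mul, h1] at h; exact h
  have s2 : v * star v * σ (σ v) = σ (σ v) := by
    have h := congrArg σ habs2; rw [map_mul, h2] at h; exact h
  have key1 : σ (σ (star v) * v) = σ (star v) * v := by
    calc σ (σ (star v) * v) = σ (σ (star v)) * σ v := map_mul σ _ _
      _ = star v * v * σ (σ (star v)) * σ v := by rw [s1]
      _ = σ (star v) * σ v * σ (σ (star v)) * σ v := by rw [hvv]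
      _ = σ (star v) * (σ v * σ (σ (star v))) * σ v := by rw [mul_assoc (σ (star v))]
      _ = σ (star v) * (v * σ (star v)) * σ v := by rw [hA]
      _ = σ (star v) * v * (σ (star v) * σ v) := by simp only [mul_assoc]
      _ = σ (star v) * v * (star v * v) := by rw [hvv]
      _ = σ (star v) * (v * star v * v) := by simp only [mul_assoc]
      _ = σ (star v) * v := by rw [hv]
  have key2 : σ (σ v * star v) = σ v * star v := by
    calc σ (σ v * star v) = σ (σ v) * σ (star v) := map_mul σ _ _
      _ = v * star v * σ (σ v) * σ (star v) := by rw [s2]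
      _ = σ v * σ (star v) * σ (σ v) * σ (star v) := by rw [hvv2]
      _ = σ v * (σ (star v) * σ (σ v)) * σ (star v) := by rw [mul_assoc (σ v)]
      _ = σ v * (star v * σ v) * σ (star v) := by rw [hB]
      _ = σ v * star v * (σ v * σ (star v)) := by simp only [mul_assoc]
      _ = σ v * star v * (v * star v) := by rw [hvv2]
      _ = σ v * (star v * v * star v) := by simp only [mul_assoc]
      _ = σ v * star v := by rw [b]
  have E1 : (1 - star v * v) * σ (star v) + star v * (1 - v * star v) = 0 := by
    rw [sub_mul, one_mul, habs1, mul_sub, mul_one, b']; simp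
  have E2 : (1 - star v * v) * star v + σ (star v) * (1 - v * star v) = 0 := by
    rw [sub_mul, one_mul, b, mul_sub, mul_one, habs4]; simp
  have E3 : v * (1 - star v * v) + (1 - v * star v) * σ v = 0 := by
    rw [mul_sub, mul_one, hv', sub_mul, one_mul, habs2]; simp
  have E4 : σ v * (1 - star v * v) + (1 - v * star v) * v = 0 := by
    rw [mul_sub, mul_one, habs3, sub_mul, one_mul, hv]; simp
  fin_cases i <;> fin_cases j <;> constructor <;>
      simp only [Matrix.mul_apply, Fin.sum_univ_two, Matrix.map_apply, Matrix.of_apply,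
        Matrix.cons_val', Matrix.cons_val_zero, Matrix.cons_val_one, Matrix.head_cons,
        Matrix.head_fin_const, Fin.zero_eta, Fin.mk_one, Matrix.empty_val',
        Matrix.cons_val_fin_one, Set.mem_setOf_eq]
  · rw [hP, map_add, h4, map_mul, hP]
  · rw [hP, map_add, key1, map_mul, hP]
  · rw [hQ, E1, map_zero]
  · rw [hP, E2, map_zero]
  · rw [hP, E3, map_zero]
  · rw [hQ, E4, map_zero]
  · rw [hQ, map_add, h3, map_mul, hQ]
  · rw [hQ, map_add, key2, map_mul, hQ]
end

section
/- Let σ be a regular automorphism of a unital C*-algebra A and let u ∈ A be a unitary lying in the fixed-point algebra F = {a ∈ A : σ(a) = a}. Then there exists a continuous path t ↦ w_t (t ∈ [0,1]) of unitaries in M₂(A), each satisfying the modular condition with respect to σ, such that w_0 is the block diagonal matrix diag(u, u*) and w_1 is the identity matrix of M₂(A). -/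
set_option linter.unusedSectionVars false
set_option maxHeartbeats 1000000

section Aux

variable {A : Type*} [NormedRing A] [StarRing A] [CStarRing A] [NormedAlgebra ℂ A] [StarModule ℂ A]

def Dm (u : A) : Matrix (Fin 2) (Fin 2) A := !![u, 0; 0, 1]

noncomputable def Rm (A : Type*) [NormedRing A] [NormedAlgebra ℂ A] (θ : ℝ) :
    Matrix (Fin 2) (Fin 2) A :=
  !![algebraMap ℂ A (Real.cos θ), -(algebraMap ℂ A (Real.sin θ));
     algebraMap ℂ A (Real.sin θ), algebraMap ℂ A (Real.cos θ)]

lemma star_Dm (u : A) : star (Dm u) = !![star u, 0; 0, 1] := by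
  ext i j
  fin_cases i <;> fin_cases j <;>
    simp [Dm, Matrix.star_apply, Matrix.conjTranspose_apply]

lemma star_Rm (θ : ℝ) : star (Rm A θ) = Rm A (-θ) := by
  ext i j
  fin_cases i <;> fin_cases j <;>
    simp [Rm, Matrix.star_apply, Matrix.conjTranspose_apply, ← algebraMap_star_comm,
      Complex.star_def, Complex.conj_ofReal, ← Complex.cos_conj, ← Complex.sin_conj]

lemma Rm_mul_Rm_neg (θ : ℝ) : Rm A θ * Rm A (-θ) = 1 := by
  have h : algebraMap ℂ A (Real.cos θ) * algebraMap ℂ A (Real.cos θ)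
      + algebraMap ℂ A (Real.sin θ) * algebraMap ℂ A (Real.sin θ) = 1 := by
    rw [← map_mul, ← map_mul, ← map_add, show ((Real.cos θ : ℂ) * (Real.cos θ)
        + (Real.sin θ) * (Real.sin θ)) = ((1 : ℝ) : ℂ) by
      norm_cast
      rw [← sq, ← sq, add_comm]
      exact Real.sin_sq_add_cos_sq θ]
    simp
  have hmul : ∀ x y : ℂ, algebraMap ℂ A x * algebraMap ℂ A y = algebraMap ℂ A (x * y) :=
    fun x y => (map_mul _ _ _).symm
  have hadd : ∀ x y : ℂ, algebraMap ℂ A x + algebraMap ℂ A y = algebraMap ℂ A (x + y) :=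
    fun x y => (map_add _ _ _).symm
  have key1 : Complex.cos θ * Complex.cos θ + Complex.sin θ * Complex.sin θ = 1 := by
    rw [← sq, ← sq]; exact Complex.cos_sq_add_sin_sq _
  have key2 : Complex.sin θ * Complex.sin θ + Complex.cos θ * Complex.cos θ = 1 := by
    rw [← sq, ← sq]; exact Complex.sin_sq_add_cos_sq _
  ext i j
  fin_cases i <;> fin_cases j <;>
    simp [Rm, Real.cos_neg, Real.sin_neg, map_neg, neg_neg, Matrix.mul_apply,
      Fin.sum_univ_two, Matrix.one_apply] <;>
  all_goals
    rw [hmul, hmul]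
    first
      | (rw [mul_comm (Complex.sin (θ : ℂ)) (Complex.cos (θ : ℂ))]
         exact add_neg_cancel _)
      | (rw [hadd, key1]; exact map_one _)
      | (rw [hadd, key2]; exact map_one _)


lemma Rm_unitary (θ : ℝ) : (Rm A θ) ∈ unitary (Matrix (Fin 2) (Fin 2) A) := by
  rw [Unitary.mem_iff, star_Rm]
  refine ⟨?_, Rm_mul_Rm_neg θ⟩
  have := Rm_mul_Rm_neg (A := A) (-θ)
  rwa [neg_neg] at this

lemma Dm_unitary {u : A} (hu : u ∈ unitary A) :
    (Dm u) ∈ unitary (Matrix (Fin 2) (Fin 2) A) := by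
  obtain ⟨h1, h2⟩ := Unitary.mem_iff.mp hu
  rw [Unitary.mem_iff, star_Dm]
  constructor <;> · ext i j; fin_cases i <;> fin_cases j <;>
    simp [Dm, Matrix.mul_apply, Fin.sum_univ_two, Matrix.one_apply, h1, h2]

lemma map_aequiv_mul (σ : A ≃ₐ[ℂ] A) (M N : Matrix (Fin 2) (Fin 2) A) :
    (M * N).map ⇑σ = M.map ⇑σ * N.map ⇑σ := by
  ext i j
  simp [Matrix.mul_apply, Matrix.map_apply, map_sum]

lemma map_Rm (σ : A ≃ₐ[ℂ] A) (θ : ℝ) : (Rm A θ).map ⇑σ = Rm A θ := by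
  ext i j
  fin_cases i <;> fin_cases j <;>
    simp [Rm, Matrix.map_apply, AlgEquiv.commutes]

lemma continuous_Rm : Continuous fun θ : ℝ => (Rm A θ) := by
  apply continuous_matrix
  intro i j
  fin_cases i <;> fin_cases j <;> simp only [Rm, Matrix.cons_val', Matrix.cons_val_zero,
    Matrix.cons_val_one, Matrix.head_cons, Matrix.empty_val', Matrix.cons_val_fin_one,
    Matrix.head_fin_const, Fin.zero_eta, Fin.mk_one, Matrix.of_apply] <;>
  first
    | exact (continuous_algebraMap ℂ A).comp (Complex.continuous_ofReal.comp Real.continuous_cos)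
    | exact (continuous_algebraMap ℂ A).comp (Complex.continuous_ofReal.comp Real.continuous_sin)
    | exact ((continuous_algebraMap ℂ A).comp
        (Complex.continuous_ofReal.comp Real.continuous_sin)).neg

end Aux

/-- A unitary `w ∈ M₂(A)` satisfies the modular condition with respect to the automorphism `σ`
(acting entrywise) if `w σ(w*)` and `w* σ(w)` have all their entries in the fixed-point algebra
`F = {a | σ a = a}`. -/
def SatisfiesModularCondition {A : Type*} [NormedRing A] [StarRing A] [CStarRing A]
    [NormedAlgebra ℂ A] [StarModule ℂ A] (σ : A ≃ₐ[ℂ] A)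
    (w : Matrix (Fin 2) (Fin 2) A) : Prop :=
  (∀ i j : Fin 2, (w * (star w).map ⇑σ) i j ∈ {a : A | σ a = a}) ∧
  (∀ i j : Fin 2, (star w * w.map ⇑σ) i j ∈ {a : A | σ a = a})

/-- Let `σ` be a regular automorphism of a unital C*-algebra `A` and `u ∈ A`
a unitary in the fixed-point algebra `F`.  Then there is a continuous path `t ↦ w t`, `t ∈ [0,1]`,
of unitaries in `M₂(A)` satisfying the modular condition, with `w 0 = diag(u, u*)` and
`w 1 = 1`. -/
theorem stmt10
    (A : Type*) [NormedRing A] [StarRing A] [CStarRing A] [NormedAlgebra ℂ A] [StarModule ℂ A]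
    (σ : A ≃ₐ[ℂ] A)
    (hreg : ∀ a : A, star (σ a) = σ.symm (star a))
    (u : A) (hu : u ∈ unitary A) (hfix : σ u = u) :
    ∃ w : ℝ → Matrix (Fin 2) (Fin 2) A,
      ContinuousOn w (Set.Icc (0 : ℝ) 1) ∧
      (∀ t ∈ Set.Icc (0 : ℝ) 1,
        w t ∈ unitary (Matrix (Fin 2) (Fin 2) A) ∧ SatisfiesModularCondition σ (w t)) ∧
      w 0 = !![u, 0; 0, star u] ∧
      w 1 = 1 := by
  obtain ⟨hu1, hu2⟩ := Unitary.mem_iff.mp hu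
  -- σ fixes star a whenever it fixes a
  have hfixstar : ∀ a : A, σ a = a → σ (star a) = star a := by
    intro a ha
    have h := hreg a
    rw [ha] at h
    exact (congrArg σ h).trans (σ.apply_symm_apply _)
  set f : ℝ → ℝ := fun t => Real.pi * (1 - t) / 2 with hf_def
  refine ⟨fun t => Dm u * Rm A (f t) * star (Dm u) * Rm A (-(f t)), ?_, ?_, ?_, ?_⟩
  · -- continuity
    have hf : Continuous f := by fun_prop
    exact (((continuous_const.matrix_mul (continuous_Rm.comp hf)).matrix_mul
      continuous_const).matrix_mul (continuous_Rm.comp hf.neg)).continuousOn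
  · intro t _
    have hDu : Dm u ∈ unitary (Matrix (Fin 2) (Fin 2) A) := Dm_unitary hu
    have hwu : Dm u * Rm A (f t) * star (Dm u) * Rm A (-(f t)) ∈
        unitary (Matrix (Fin 2) (Fin 2) A) :=
      mul_mem (mul_mem (mul_mem hDu (Rm_unitary _)) (Unitary.star_mem hDu)) (Rm_unitary _)
    refine ⟨hwu, ?_, ?_⟩
    all_goals {
      set w : Matrix (Fin 2) (Fin 2) A := Dm u * Rm A (f t) * star (Dm u) * Rm A (-(f t)) with hw
      have hD : (Dm u).map ⇑σ = Dm u := by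
        ext i j
        fin_cases i <;> fin_cases j <;> simp [Dm, Matrix.map_apply, hfix, map_zero, map_one]
      have hDs : (star (Dm u)).map ⇑σ = star (Dm u) := by
        rw [star_Dm]
        ext i j
        fin_cases i <;> fin_cases j <;>
          simp [Matrix.map_apply, hfixstar u hfix, map_zero, map_one]
      have hwmap : w.map ⇑σ = w := by
        rw [hw, map_aequiv_mul, map_aequiv_mul, map_aequiv_mul, hD, hDs, map_Rm, map_Rm]
      have hwsmap : (star w).map ⇑σ = star w := by
        ext i j
        have hij : σ (w j i) = w j i := congrFun (congrFun hwmap j) i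
        simp only [Matrix.map_apply, Matrix.star_apply, Matrix.conjTranspose_apply]
        exact hfixstar _ hij
      intro i j
      simp only [Set.mem_setOf_eq]
      first
        | rw [hwsmap, (Unitary.mem_iff.mp hwu).2]
        | rw [hwmap, (Unitary.mem_iff.mp hwu).1]
      by_cases h : i = j <;> simp [Matrix.one_apply, h, map_one, map_zero]
    }
  · -- w 0 = diag(u, star u)
    have h0 : f 0 = Real.pi / 2 := by simp [hf_def]
    beta_reduce
    rw [h0]
    have hc : Rm A (Real.pi / 2) = !![0, -1; 1, 0] := by
      simp [Rm, Real.cos_pi_div_two, Real.sin_pi_div_two]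
    have hc' : Rm A (-(Real.pi / 2)) = !![0, 1; -1, 0] := by
      ext i j
      fin_cases i <;> fin_cases j <;>
        simp [Rm, Real.cos_neg, Real.sin_neg, Real.cos_pi_div_two, Real.sin_pi_div_two]
    rw [hc, hc', star_Dm]
    simp [Dm, Matrix.mul_fin_two]
  · -- w 1 = 1
    have h1 : f 1 = 0 := by simp [hf_def]
    beta_reduce
    rw [h1, neg_zero]
    have hc : Rm A 0 = !![1, 0; 0, 1] := by
      simp [Rm, Real.cos_zero, Real.sin_zero]
    rw [hc, star_Dm]
    have : (1 : Matrix (Fin 2) (Fin 2) A) = !![1, 0; 0, 1] := by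
      ext i j; fin_cases i <;> fin_cases j <;> simp [Matrix.one_apply]
    rw [this]
    simp [Dm, Matrix.mul_fin_two, hu2]
end

section
/- Let v be a partial isometry (v v* v = v) in a unital C*-algebra A and let σ be a regular automorphism of A satisfying σ(v*v) = v*v, σ(v v*) = v v*, v σ(v*) ∈ F and v* σ(v) ∈ F. Then there is a continuous path t ↦ w_t (t ∈ [0,1]) of unitaries in M₂(A), each satisfying the modular condition with respect to σ, with w_0 = u_v = [[1 − v*v, v*], [v, 1 − v v*]] and w_1 = u_{v*} = [[1 − v v*, v], [v*, 1 − v*v]]. -/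
/-- Let `v` be a partial isometry (`v v* v = v`) in a unital C*-algebra `A` and
`σ` a regular automorphism with `σ(v*v) = v*v`, `σ(v v*) = v v*`, and `v σ(v*), v* σ(v)` in the
fixed-point algebra.  Then there is a continuous path `t ↦ w t`, `t ∈ [0,1]`, of unitaries in
`M₂(A)` each satisfying the modular condition, with `w 0 = u_v = [[1 - v*v, v*], [v, 1 - v v*]]`
and `w 1 = u_{v*} = [[1 - v v*, v], [v*, 1 - v*v]]`. -/
theorem stmt12
    (A : Type*) [NormedRing A] [StarRing A] [CStarRing A] [NormedAlgebra ℂ A] [StarModule ℂ A]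
    (σ : A ≃ₐ[ℂ] A)
    (hreg : ∀ a : A, star (σ a) = σ.symm (star a))
    (v : A) (hv : v * star v * v = v)
    (h1 : σ (star v * v) = star v * v)
    (h2 : σ (v * star v) = v * star v)
    (h3 : v * σ (star v) ∈ {a : A | σ a = a})
    (h4 : star v * σ v ∈ {a : A | σ a = a}) :
    ∃ w : ℝ → Matrix (Fin 2) (Fin 2) A,
      ContinuousOn w (Set.Icc (0 : ℝ) 1) ∧
      (∀ t ∈ Set.Icc (0 : ℝ) 1,
        w t ∈ unitary (Matrix (Fin 2) (Fin 2) A) ∧ SatisfiesModularCondition σ (w t)) ∧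
      w 0 = !![1 - star v * v, star v; v, 1 - v * star v] ∧
      w 1 = !![1 - v * star v, v; star v, 1 - star v * v] := by
  have h3' : σ (v * σ (star v)) = v * σ (star v) := h3
  have h4' : σ (star v * σ v) = star v * σ v := h4
  -- basic identities for the partial isometry
  have hvp : v * (star v * v) = v := by rw [← mul_assoc]; exact hv
  have hv' : star v * (v * star v) = star v := by
    have := congrArg star hv
    simpa [star_mul, mul_assoc] using this
  have hstep1 : σ v * σ (σ (star v)) = v * σ (star v) := by rw [← map_mul]; exact h3'
  have hstep2 : σ (star v) * σ (σ v) = star v * σ v := by rw [← map_mul]; exact h4'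
  have e2 : σ (σ (star v)) * σ (σ v) = star v * v := by
    rw [← map_mul, ← map_mul, h1, h1]
  have L1 : σ v = v * (star v * σ v) := by
    have key : σ v * (σ (σ (star v)) * σ (σ v)) = v * (star v * σ v) := by
      rw [← mul_assoc, hstep1, mul_assoc, hstep2]
    rw [e2] at key
    rw [← key, ← h1, ← map_mul, hvp]
  have L1' : σ v = (v * star v) * σ v := by rw [mul_assoc]; exact L1
  have hst : σ.symm (star v) = σ.symm (star v) * (v * star v) := by
    have e := congrArg star L1'
    rw [star_mul, hreg] at e
    simpa [star_mul, star_star, mul_assoc] using e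
  have Lb : σ (star v) * (v * star v) = σ (star v) := by
    have e := congrArg σ (congrArg σ hst)
    simp only [map_mul, AlgEquiv.apply_symm_apply, h2] at e
    exact e.symm
  have L2 : star v * (v * σ (star v)) = σ (star v) := by
    calc star v * (v * σ (star v))
        = star v * (σ v * σ (σ (star v))) := by rw [hstep1]
      _ = (star v * σ v) * σ (σ (star v)) := by rw [mul_assoc]
      _ = (σ (star v) * σ (σ v)) * σ (σ (star v)) := by rw [hstep2]
      _ = σ (star v) * (σ (σ v) * σ (σ (star v))) := by rw [mul_assoc]
      _ = σ (star v) * σ (σ (v * star v)) := by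
            have h' : σ (σ v) * σ (σ (star v)) = σ (σ (v * star v)) := by
              rw [map_mul, map_mul]
            rw [h']
      _ = σ (star v) * (v * star v) := by rw [h2, h2]
      _ = σ (star v) := Lb
  -- the matrix U = u_v and the scalar path
  set U : Matrix (Fin 2) (Fin 2) A := !![1 - star v * v, star v; v, 1 - v * star v] with hUdef
  set z : ℝ → ℂ := fun t => Complex.exp ((Real.pi * t : ℝ) * Complex.I) with hzdef
  set c : ℝ → ℂ := fun t => (1 + z t) / 2 with hcdef
  set s : ℝ → ℂ := fun t => (1 - z t) / 2 with hsdef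
  set Sm : ℝ → Matrix (Fin 2) (Fin 2) A :=
    fun t => !![c t • 1, s t • 1; s t • 1, c t • 1] with hSmdef
  -- scalar identities
  have hzz : ∀ t, z t * star (z t) = 1 := by
    intro t
    simp only [hzdef, Complex.star_def, ← Complex.exp_conj, map_mul,
      Complex.conj_ofReal, Complex.conj_I, mul_neg, ← Complex.exp_add]
    simp
  have hstarc : ∀ t, star (c t) = (1 + star (z t)) / 2 := by
    intro t; simp only [hcdef]
    rw [star_div₀]
    simp
  have hstars : ∀ t, star (s t) = (1 - star (z t)) / 2 := by
    intro t; simp only [hsdef]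
    rw [star_div₀]
    simp [star_sub]
  have hid1 : ∀ t, c t * star (c t) + s t * star (s t) = 1 := by
    intro t
    rw [hstarc t, hstars t]
    simp only [hcdef, hsdef]
    linear_combination (hzz t) / 2
  have hid2 : ∀ t, c t * star (s t) + s t * star (c t) = 0 := by
    intro t
    rw [hstarc t, hstars t]
    simp only [hcdef, hsdef]
    linear_combination -(hzz t) / 2
  have hid1' : ∀ t, s t * star (s t) + c t * star (c t) = 1 := by
    intro t; rw [add_comm]; exact hid1 t
  have hid2' : ∀ t, s t * star (c t) + c t * star (s t) = 0 := by
    intro t; rw [add_comm]; exact hid2 t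
  have hid3 : ∀ t, star (c t) * c t + star (s t) * s t = 1 := by
    intro t
    rw [mul_comm, mul_comm (star (s t))]; exact hid1 t
  have hid4 : ∀ t, star (c t) * s t + star (s t) * c t = 0 := by
    intro t
    rw [mul_comm, mul_comm (star (s t))]; exact hid2' t
  have hid3' : ∀ t, star (s t) * s t + star (c t) * c t = 1 := by
    intro t; rw [add_comm]; exact hid3 t
  have hid4' : ∀ t, star (s t) * c t + star (c t) * s t = 0 := by
    intro t; rw [add_comm]; exact hid4 t
  -- matrix helpers
  have mulS : ∀ a b a' b' : ℂ,
      !![a • (1:A), b • 1; b • 1, a • 1] * !![a' • 1, b' • 1; b' • 1, a' • 1] =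
      !![(a*a'+b*b') • 1, (a*b'+b*a') • 1; (b*a'+a*b') • 1, (b*b'+a*a') • 1] := by
    intro a b a' b'
    rw [Matrix.mul_fin_two]
    rw [show a • (1:A) * (a' • 1) + b • 1 * (b' • 1) = (a*a'+b*b') • 1 by
      rw [smul_mul_smul_comm, smul_mul_smul_comm, one_mul, ← add_smul]]
    rw [show a • (1:A) * (b' • 1) + b • 1 * (a' • 1) = (a*b'+b*a') • 1 by
      rw [smul_mul_smul_comm, smul_mul_smul_comm, one_mul, ← add_smul]]
    rw [show b • (1:A) * (a' • 1) + a • 1 * (b' • 1) = (b*a'+a*b') • 1 by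
      rw [smul_mul_smul_comm, smul_mul_smul_comm, one_mul, ← add_smul]]
    rw [show b • (1:A) * (b' • 1) + a • 1 * (a' • 1) = (b*b'+a*a') • 1 by
      rw [smul_mul_smul_comm, smul_mul_smul_comm, one_mul, ← add_smul]]
  have hSstar : ∀ t, star (Sm t) =
      !![star (c t) • 1, star (s t) • 1; star (s t) • 1, star (c t) • 1] := by
    intro t
    simp only [hSmdef]
    ext i j
    fin_cases i <;> fin_cases j <;> simp [Matrix.star_apply, star_smul]
  have hSSstar : ∀ t, Sm t * star (Sm t) = 1 := by
    intro t
    rw [hSstar t]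
    simp only [hSmdef]
    rw [mulS, hid1 t, hid2 t, hid2' t, hid1' t, one_smul, zero_smul, Matrix.one_fin_two]
  have hstarSS : ∀ t, star (Sm t) * Sm t = 1 := by
    intro t
    rw [hSstar t]
    simp only [hSmdef]
    rw [mulS, hid3 t, hid4 t, hid4' t, hid3' t, one_smul, zero_smul, Matrix.one_fin_two]
  have hUstar : star U = U := by
    simp only [hUdef]
    ext i j
    fin_cases i <;> fin_cases j <;>
      simp [Matrix.star_apply, star_sub, star_mul, star_star, star_one]
  -- U is a self-adjoint unitary
  have hpp : star v * (v * (star v * v)) = star v * v := by rw [hvp]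
  have hqq : v * (star v * (v * star v)) = v * star v := by rw [hv']
  have hUU : U * U = 1 := by
    simp only [hUdef]
    rw [Matrix.mul_fin_two]
    rw [show (1 - star v * v) * (1 - star v * v) + star v * v = 1 by
      simp only [sub_mul, mul_sub, one_mul, mul_one, mul_assoc]
      rw [hpp]; abel]
    rw [show (1 - star v * v) * star v + star v * (1 - v * star v) = 0 by
      simp only [sub_mul, mul_sub, one_mul, mul_one, mul_assoc]
      rw [show star v * (v * star v) = star v from hv']; abel]
    rw [show v * (1 - star v * v) + (1 - v * star v) * v = 0 by
      simp only [sub_mul, mul_sub, one_mul, mul_one, mul_assoc]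
      rw [hvp]; abel]
    rw [show v * star v + (1 - v * star v) * (1 - v * star v) = 1 by
      simp only [sub_mul, mul_sub, one_mul, mul_one, mul_assoc]
      rw [hqq]; abel]
    rw [Matrix.one_fin_two]
  -- map σ facts
  have hmapmul : ∀ M N : Matrix (Fin 2) (Fin 2) A,
      (M * N).map ⇑σ = M.map ⇑σ * N.map ⇑σ := by
    intro M N
    ext i j
    simp [Matrix.map_apply, Matrix.mul_apply, map_sum]
  have hmapS : ∀ t, (Sm t).map ⇑σ = Sm t := by
    intro t
    simp only [hSmdef]
    ext i j
    fin_cases i <;> fin_cases j <;> simp [Matrix.map_apply]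
  have hmapSstar : ∀ t, (star (Sm t)).map ⇑σ = star (Sm t) := by
    intro t
    rw [hSstar t]
    ext i j
    fin_cases i <;> fin_cases j <;> simp [Matrix.map_apply]
  have hmapU : U.map ⇑σ = !![1 - star v * v, σ (star v); σ v, 1 - v * star v] := by
    simp only [hUdef]
    ext i j
    fin_cases i <;> fin_cases j <;> simp [Matrix.map_apply, map_sub, map_one, h1, h2]
  -- the key product U * σ(U)
  have hK : U * U.map ⇑σ =
      !![(1 - star v * v) * (1 - star v * v) + star v * σ v, 0;
         0, v * σ (star v) + (1 - v * star v) * (1 - v * star v)] := by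
    rw [hmapU]
    simp only [hUdef]
    rw [Matrix.mul_fin_two]
    rw [show (1 - star v * v) * σ (star v) + star v * (1 - v * star v) = 0 by
      simp only [sub_mul, mul_sub, one_mul, mul_one, mul_assoc]
      rw [L2, show star v * (v * star v) = star v from hv']; abel]
    rw [show v * (1 - star v * v) + (1 - v * star v) * σ v = 0 by
      simp only [sub_mul, mul_sub, one_mul, mul_one, mul_assoc]
      rw [hvp, ← L1]; abel]
  have hx : σ ((1 - star v * v) * (1 - star v * v) + star v * σ v)
      = (1 - star v * v) * (1 - star v * v) + star v * σ v := by
    rw [map_add, map_mul, map_sub, map_one, h1, h4']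
  have hy : σ (v * σ (star v) + (1 - v * star v) * (1 - v * star v))
      = v * σ (star v) + (1 - v * star v) * (1 - v * star v) := by
    rw [map_add, h3', map_mul, map_sub, map_one, h2]
  have memconj : ∀ (a b a' b' : ℂ) (x y : A), σ x = x → σ y = y → ∀ i j : Fin 2,
      ((!![a • (1:A), b • 1; b • 1, a • 1] * !![x, 0; 0, y] *
        !![a' • 1, b' • 1; b' • 1, a' • 1] : Matrix (Fin 2) (Fin 2) A)) i j
        ∈ {r : A | σ r = r} := by
    intro a b a' b' x y hx hy i j
    rw [Matrix.mul_fin_two, Matrix.mul_fin_two]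
    fin_cases i <;> fin_cases j <;>
      simp [smul_mul_assoc, mul_smul_comm, smul_smul,
        Set.mem_setOf_eq, map_add, map_smul, hx, hy]
  -- star of w t
  have hws : ∀ t, star (Sm t * U * Sm t) = star (Sm t) * U * star (Sm t) := by
    intro t
    simp only [star_mul, hUstar, mul_assoc]
  refine ⟨fun t => Sm t * U * Sm t, ?_, ?_, ?_, ?_⟩
  · -- continuity
    have hc : Continuous fun t : ℝ => c t := by
      simp only [hcdef, hzdef]
      fun_prop
    have hs : Continuous fun t : ℝ => s t := by
      simp only [hsdef, hzdef]
      fun_prop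
    have hS : Continuous fun t : ℝ => Sm t := by
      refine continuous_matrix fun i j => ?_
      fin_cases i <;> fin_cases j <;> simp only [hSmdef] <;>
        simp <;> exact Continuous.smul (by assumption) continuous_const
    exact (((hS.matrix_mul continuous_const).matrix_mul hS)).continuousOn
  · -- unitarity and modular condition
    intro t _
    have cancel1 : ∀ X : Matrix (Fin 2) (Fin 2) A, Sm t * (star (Sm t) * X) = X := by
      intro X; rw [← mul_assoc, hSSstar t, one_mul]
    have cancel2 : ∀ X : Matrix (Fin 2) (Fin 2) A, star (Sm t) * (Sm t * X) = X := by
      intro X; rw [← mul_assoc, hstarSS t, one_mul]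
    constructor
    · rw [Unitary.mem_iff]
      constructor
      · rw [hws t]
        simp only [mul_assoc]
        rw [cancel2, show U * (U * Sm t) = Sm t by rw [← mul_assoc, hUU, one_mul],
          hstarSS t]
      · rw [hws t]
        simp only [mul_assoc]
        rw [cancel1, show U * (U * star (Sm t)) = star (Sm t) by
          rw [← mul_assoc, hUU, one_mul], hSSstar t]
    · have hM1 : Sm t * U * Sm t * (star (Sm t * U * Sm t)).map ⇑σ
          = Sm t * (U * U.map ⇑σ) * star (Sm t) := by
        rw [hws t, hmapmul, hmapmul, hmapSstar t]
        simp only [mul_assoc]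
        rw [cancel1]
      have hM2 : star (Sm t * U * Sm t) * (Sm t * U * Sm t).map ⇑σ
          = star (Sm t) * (U * U.map ⇑σ) * Sm t := by
        rw [hws t, hmapmul, hmapmul, hmapS t]
        simp only [mul_assoc]
        rw [cancel2]
      constructor
      · intro i j
        rw [hM1, hK, hSstar t]
        simp only [hSmdef]
        exact memconj _ _ _ _ _ _ hx hy i j
      · intro i j
        rw [hM2, hK, hSstar t]
        simp only [hSmdef]
        exact memconj _ _ _ _ _ _ hx hy i j
  · -- w 0
    have hz0 : z 0 = 1 := by simp [hzdef]
    have hS0 : Sm 0 = 1 := by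
      simp only [hSmdef, hcdef, hsdef, hz0]
      norm_num
      exact Matrix.one_fin_two.symm
    show Sm 0 * U * Sm 0 = U
    rw [hS0, one_mul, mul_one]
  · -- w 1
    have hz1 : z 1 = -1 := by
      simp only [hzdef]
      norm_num [Complex.exp_pi_mul_I]
    have hS1 : Sm 1 = !![0, 1; 1, 0] := by
      simp only [hSmdef, hcdef, hsdef, hz1]
      norm_num
    show Sm 1 * U * Sm 1 = !![1 - v * star v, v; star v, 1 - star v * v]
    rw [hS1]
    simp only [hUdef]
    rw [Matrix.mul_fin_two, Matrix.mul_fin_two]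
    simp only [zero_mul, mul_zero, one_mul, mul_one, zero_add, add_zero]
end
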